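/- arXiv:1903.01952 — 2 statements merged into one kernel-verified Lean document; each statement's English description precedes it below -/
import Mathlib

section
/- Let M = (m_{jk}) be an infinite matrix with entries in a commutative von Neumann algebra A, set p_{jk} = (m_{jk}* m_{jk})^{1/2}, and suppose there exist constants B_c, B_r with ‖(norm)∑_j p_{jk}‖ ≤ B_c for all k and ‖(norm)∑_k p_{jk}‖ ≤ B_r for all j (the series converging in norm). Then (L_M(a_k))_j = ∑_k m_{jk} a_k defines a bounded module map L_M : ℓ²(A) → ℓ²(A) with ‖L_M‖ ≤ (B_r B_c)^{1/2}. -/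
open Filter Topology

noncomputable section
set_option maxHeartbeats 1000000
set_option synthInstance.maxHeartbeats 1000000

section

variable {H : Type*} [NormedAddCommGroup H] [InnerProductSpace ℂ H] [CompleteSpace H]

/-- Membership in the standard Hilbert module `ℓ²(A)` for a von Neumann algebra `A`. -/
def MemL2 (A : VonNeumannAlgebra H) (a : ℕ → H →L[ℂ] H) : Prop :=
  (∀ n, a n ∈ A) ∧
    ∃ s : H →L[ℂ] H,
      Tendsto (fun N : ℕ => ∑ n ∈ Finset.range N, a n * star (a n)) atTop (𝓝 s)

end

namespace SchurAux

open ContinuousLinearMap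

variable {H : Type*} [NormedAddCommGroup H] [InnerProductSpace ℂ H] [CompleteSpace H]

lemma nonneg_of_tendsto {f : ℕ → H →L[ℂ] H} {g : H →L[ℂ] H}
    (hf : ∀ n, 0 ≤ f n) (h : Tendsto f atTop (𝓝 g)) : 0 ≤ g := by
  rw [ContinuousLinearMap.nonneg_iff_isPositive]
  have hfp : ∀ n, (f n).IsPositive := fun n =>
    (ContinuousLinearMap.nonneg_iff_isPositive _).mp (hf n)
  constructor
  · have h2 : Tendsto (fun n => star (f n)) atTop (𝓝 (star g)) := h.star
    have h3 : (fun n => star (f n)) = f := funext fun n => (hfp n).isSelfAdjoint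
    rw [h3] at h2
    exact ContinuousLinearMap.isSelfAdjoint_iff_isSymmetric.mp (tendsto_nhds_unique h2 h)
  · intro x
    have hx : Tendsto (fun n => f n x) atTop (𝓝 (g x)) :=
      ((ContinuousLinearMap.apply ℂ H x).continuous.tendsto g).comp h
    have h2 : Tendsto (fun n => (f n).reApplyInnerSelf x) atTop (𝓝 (g.reApplyInnerSelf x)) := by
      simp only [ContinuousLinearMap.reApplyInnerSelf_apply]
      exact (RCLike.continuous_re.tendsto _).comp (hx.inner tendsto_const_nhds)
    exact ge_of_tendsto' h2 fun n => (hfp n).2 x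

lemma smul_nonneg' {r : ℝ} (hr : 0 ≤ r) {c : H →L[ℂ] H} (hc : 0 ≤ c) : 0 ≤ r • c := by
  have key : star ((Real.sqrt r : ℝ) • (1 : H →L[ℂ] H)) * c * ((Real.sqrt r : ℝ) • 1) = r • c := by
    rw [star_smul, star_trivial, star_one, smul_mul_assoc, one_mul, mul_smul_comm, mul_one,
      smul_smul, Real.mul_self_sqrt hr]
  rw [← key]
  exact star_left_conjugate_nonneg hc _

lemma smul_one_nonneg {r : ℝ} (hr : 0 ≤ r) : 0 ≤ (r • 1 : H →L[ℂ] H) :=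
  smul_nonneg' hr zero_le_one

lemma smul_mono {r : ℝ} (hr : 0 ≤ r) {a b : H →L[ℂ] H} (h : a ≤ b) : r • a ≤ r • b := by
  rw [← sub_nonneg, ← smul_sub]
  exact smul_nonneg' hr (sub_nonneg.mpr h)

lemma mul_nonneg_comm {u v : H →L[ℂ] H} (hu : 0 ≤ u) (hv : 0 ≤ v) (huv : Commute u v) :
    0 ≤ u * v := by
  have hsa : IsSelfAdjoint (u * v) := by
    rw [IsSelfAdjoint, star_mul, (IsSelfAdjoint.of_nonneg hu).star_eq,
      (IsSelfAdjoint.of_nonneg hv).star_eq, huv.eq]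
  rw [StarOrderedRing.nonneg_iff_spectrum_nonneg (R := ℝ) _ hsa]
  intro x hx
  rcases eq_or_ne x 0 with h0 | h0
  · simp [h0]
  set q := CFC.sqrt u with hq
  have hq0 : 0 ≤ q := CFC.sqrt_nonneg u
  have hqq : q * q = u := CFC.sqrt_mul_sqrt_self u hu
  have h1 : x ∈ spectrum ℝ (q * (q * v)) := by rw [← mul_assoc, hqq]; exact hx
  have h2 : x ∈ spectrum ℝ ((q * v) * q) := by
    have : spectrum ℝ (q * (q * v)) \ {0} = spectrum ℝ ((q * v) * q) \ {0} :=
      spectrum.nonzero_mul_comm _ _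
    have hmem : x ∈ spectrum ℝ (q * (q * v)) \ {0} := ⟨h1, h0⟩
    rw [this] at hmem
    exact hmem.1
  have hpos : 0 ≤ q * v * q := by
    have := star_left_conjugate_nonneg hv q
    rwa [(IsSelfAdjoint.of_nonneg hq0).star_eq] at this
  exact spectrum_nonneg_of_nonneg hpos h2

lemma mul_le_mul_left_comm {w u v : H →L[ℂ] H} (hw : 0 ≤ w) (h : u ≤ v)
    (h1 : Commute w u) (h2 : Commute w v) : w * u ≤ w * v := by
  rw [← sub_nonneg, ← mul_sub]
  exact mul_nonneg_comm hw (sub_nonneg.mpr h) (h2.sub_right h1)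

lemma mul_le_mul_right_comm {w u v : H →L[ℂ] H} (hw : 0 ≤ w) (h : u ≤ v)
    (h1 : Commute w u) (h2 : Commute w v) : u * w ≤ v * w := by
  rw [← h1.eq, ← h2.eq]
  exact mul_le_mul_left_comm hw h h1 h2

lemma le_smul_one {a : H →L[ℂ] H} {r : ℝ} (ha : 0 ≤ a) (h : ‖a‖ ≤ r) : a ≤ r • 1 := by
  calc a ≤ algebraMap ℝ _ ‖a‖ :=
        IsSelfAdjoint.le_algebraMap_norm_self (IsSelfAdjoint.of_nonneg ha)
    _ = ‖a‖ • 1 := Algebra.algebraMap_eq_smul_one _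
    _ ≤ r • 1 := by
        rw [← sub_nonneg, ← sub_smul]
        exact smul_one_nonneg (by linarith)

lemma norm_le_of_le_smul_one {a : H →L[ℂ] H} {r : ℝ} (ha : 0 ≤ a) (hr : 0 ≤ r)
    (h : a ≤ r • 1) : ‖a‖ ≤ r := by
  have h1 : ‖a‖ ≤ ‖r • (1 : H →L[ℂ] H)‖ := CStarAlgebra.norm_le_norm_of_nonneg_of_le ha h
  have h2 : ‖r • (1 : H →L[ℂ] H)‖ = r * ‖(1 : H →L[ℂ] H)‖ := by
    rw [norm_smul, Real.norm_of_nonneg hr]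
  have h3 : ‖(1 : H →L[ℂ] H)‖ ≤ 1 := ContinuousLinearMap.norm_id_le
  nlinarith [norm_nonneg (1 : H →L[ℂ] H)]

lemma sum_le_of_tendsto {q : ℕ → H →L[ℂ] H} (hq : ∀ k, 0 ≤ q k) {L : H →L[ℂ] H}
    (h : Tendsto (fun N : ℕ => ∑ k ∈ Finset.range N, q k) atTop (𝓝 L)) (N : ℕ) :
    ∑ k ∈ Finset.range N, q k ≤ L := by
  rw [← sub_nonneg]
  apply nonneg_of_tendsto (f := fun M : ℕ =>
    (∑ k ∈ Finset.range (N + M), q k) - ∑ k ∈ Finset.range N, q k)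
  · intro M
    rw [sub_nonneg]
    exact Finset.sum_le_sum_of_subset_of_nonneg
      (Finset.range_subset_range.mpr (Nat.le_add_right N M)) fun i _ _ => hq i
  · have h1 : Tendsto (fun M : ℕ => N + M) atTop atTop :=
      tendsto_atTop_mono (fun M => Nat.le_add_left M N) tendsto_id
    exact (h.comp h1).sub tendsto_const_nhds

lemma nonneg_of_le_forall_smul {S T : H →L[ℂ] H} {B : ℝ} (hS : 0 ≤ S)
    (h : ∀ ε : ℝ, 0 < ε → T ≤ (B + ε) • S) : T ≤ B • S := by
  rw [← sub_nonneg]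
  apply nonneg_of_tendsto (f := fun n : ℕ => (B + 1 / (n + 1)) • S - T)
  · intro n
    rw [sub_nonneg]
    exact h _ (by positivity)
  · have h1 : Tendsto (fun n : ℕ => B + 1 / ((n : ℝ) + 1)) atTop (𝓝 B) := by
      have := tendsto_one_div_add_atTop_nhds_zero_nat (𝕜 := ℝ)
      simpa using tendsto_const_nhds.add this
    exact (h1.smul_const S).sub tendsto_const_nhds

lemma exists_inverse {q : H →L[ℂ] H} (hq : 0 ≤ q) {ε : ℝ} (hε : 0 < ε) :
    ∃ σ : H →L[ℂ] H, σ * (q + ε • 1) = 1 ∧ (q + ε • 1) * σ = 1 ∧ 0 ≤ σ ∧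
      ∀ b, Commute b q → Commute b σ := by
  set s : H →L[ℂ] H := q + ε • 1 with hs_def
  have hs0 : 0 ≤ s := add_nonneg hq (smul_one_nonneg hε.le)
  have hu : IsUnit s := by
    by_contra hcon
    have h0 : (0:ℝ) ∈ spectrum ℝ s := (spectrum.zero_mem_iff ℝ).mpr hcon
    have hseq : s = algebraMap ℝ (H →L[ℂ] H) ε + q := by
      rw [Algebra.algebraMap_eq_smul_one, hs_def, add_comm]
    rw [hseq, ← spectrum.singleton_add_eq] at h0
    obtain ⟨x, hx, y, hy, hxy⟩ := Set.mem_add.mp h0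
    rw [Set.mem_singleton_iff] at hx
    have : 0 ≤ y := spectrum_nonneg_of_nonneg hq hy
    subst hx
    linarith
  obtain ⟨v, hv⟩ := hu
  have hvinv_l : (↑v⁻¹ : H →L[ℂ] H) * s = 1 := by rw [← hv]; exact v.inv_mul
  have hvinv_r : s * (↑v⁻¹ : H →L[ℂ] H) = 1 := by rw [← hv]; exact v.mul_inv
  have hsa : IsSelfAdjoint s := IsSelfAdjoint.of_nonneg hs0
  have hstar : star (↑v⁻¹ : H →L[ℂ] H) = ↑v⁻¹ := by
    have h1 : star (↑v⁻¹ : H →L[ℂ] H) * s = 1 := by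
      rw [← hsa.star_eq, ← star_mul, hvinv_r, star_one]
    calc star (↑v⁻¹ : H →L[ℂ] H) = star ↑v⁻¹ * (s * ↑v⁻¹) := by rw [hvinv_r, mul_one]
      _ = (star ↑v⁻¹ * s) * ↑v⁻¹ := by rw [mul_assoc]
      _ = ↑v⁻¹ := by rw [h1, one_mul]
  refine ⟨↑v⁻¹, hvinv_l, hvinv_r, ?_, ?_⟩
  · have key : (↑v⁻¹ : H →L[ℂ] H) = star ↑v⁻¹ * s * ↑v⁻¹ := by
      rw [hstar, mul_assoc, hvinv_r, mul_one]
    rw [key]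
    exact star_left_conjugate_nonneg hs0 _
  · intro b hb
    have hbs : Commute b s := by
      have h1 : Commute b (ε • (1 : H →L[ℂ] H)) := by
        unfold Commute SemiconjBy
        rw [mul_smul_comm, smul_mul_assoc, mul_one, one_mul]
      exact hb.add_right h1
    rw [← hv] at hbs
    exact hbs.units_inv_right

variable (A : VonNeumannAlgebra H)

/-- The double centralizer of (the carrier of) `A`: a commutative subring when `A` is
commutative, containing `A` and all the resolvents we need. -/
def ZZ : Subring (H →L[ℂ] H) :=
  Subring.centralizer ((Subring.centralizer ((A : Set (H →L[ℂ] H)))) : Set (H →L[ℂ] H))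

variable {A}

lemma mem_ZZ_of_mem {x : H →L[ℂ] H} (hx : x ∈ A) : x ∈ ZZ A := by
  rw [ZZ, Subring.mem_centralizer_iff]
  intro b hb
  rw [SetLike.mem_coe, Subring.mem_centralizer_iff] at hb
  exact (hb x hx).symm

lemma mem_ZZ_of_commutes {x : H →L[ℂ] H}
    (hx : ∀ b, (∀ y ∈ A, Commute b y) → Commute b x) : x ∈ ZZ A := by
  rw [ZZ, Subring.mem_centralizer_iff]
  intro b hb
  rw [SetLike.mem_coe, Subring.mem_centralizer_iff] at hb
  exact (hx b fun y hy => ((hb y hy).symm : Commute b y)).eq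

lemma ZZ_commute (hcomm : ∀ a b : H →L[ℂ] H, a ∈ A → b ∈ A → a * b = b * a)
    {x y : H →L[ℂ] H} (hx : x ∈ ZZ A) (hy : y ∈ ZZ A) : Commute x y := by
  have hAsub : ∀ z ∈ A, z ∈ Subring.centralizer ((A : Set (H →L[ℂ] H))) := by
    intro z hz
    rw [Subring.mem_centralizer_iff]
    intro g hg
    exact hcomm g z hg hz
  rw [ZZ, Subring.mem_centralizer_iff] at hy hx
  have hyC : y ∈ Subring.centralizer ((A : Set (H →L[ℂ] H))) := by
    rw [Subring.mem_centralizer_iff]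
    intro g hg
    exact hy g (SetLike.mem_coe.mpr (hAsub g hg))
  exact ((hx y (SetLike.mem_coe.mpr hyC)).symm : Commute x y)

/-- `CommRing` structure on the double centralizer. -/
def commRingZZ (hcomm : ∀ a b : H →L[ℂ] H, a ∈ A → b ∈ A → a * b = b * a) :
    CommRing (ZZ A) :=
  { (inferInstance : Ring (ZZ A)) with
    mul_comm := fun x y => Subtype.ext <| by
      exact (ZZ_commute hcomm x.2 y.2).eq }

lemma pair_identity {C : Type*} [CommRing C] (x x' y y' s t σs σt : C)
    (hs : σs * s = 1) (ht : σt * t = 1) :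
    (σs * σt) * ((t * x - s * y) * (t * x' - s * y')) =
      t * σs * (x * x') + s * σt * (y * y') - (x * y' + y * x') := by
  linear_combination (t * σs * (x * x') - (x * y' + y * x') * σs * s) * ht +
    (s * σt * (y * y') - (x * y' + y * x')) * hs

lemma mul_identity {C : Type*} [CommRing C] (m m' a a' p : C) (hp : p * p = m' * m) :
    (m * a) * (a' * m') = (p * p) * (a * a') := by
  linear_combination (-(a * a')) * hp

lemma inv_identity {C : Type*} [CommRing C] (p e σ w : C) (h : σ * (p + e) = 1) :
    p * w - σ * (p * p) * w = σ * (e * (p * w)) := by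
  linear_combination (-(p * w)) * h


lemma le_of_add_le_add {a b : H →L[ℂ] H} (h : a + a ≤ b + b) : a ≤ b := by
  have h2 : (0:H →L[ℂ] H) ≤ (2⁻¹:ℝ) • ((b + b) - (a + a)) :=
    smul_nonneg' (by norm_num) (sub_nonneg.mpr h)
  have h3 : (2⁻¹:ℝ) • ((b + b) - (a + a)) = b - a := by
    rw [← two_smul ℝ a, ← two_smul ℝ b, ← smul_sub, smul_smul]
    norm_num
  rw [h3] at h2
  exact sub_nonneg.mp h2

lemma mem_vN_of_tendsto {A : VonNeumannAlgebra H} {f : ℕ → H →L[ℂ] H} {g : H →L[ℂ] H}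
    (hf : ∀ n, f n ∈ A) (h : Tendsto f atTop (𝓝 g)) : g ∈ A := by
  rw [← SetLike.mem_coe, ← A.centralizer_centralizer]
  rw [Set.mem_centralizer_iff]
  intro b hb
  rw [Set.mem_centralizer_iff] at hb
  have hfb : (fun n => b * f n) = fun n => f n * b :=
    funext fun n => (hb (f n) (hf n)).symm
  have h1 : Tendsto (fun n => b * f n) atTop (𝓝 (b * g)) := tendsto_const_nhds.mul h
  have h2 : Tendsto (fun n => f n * b) atTop (𝓝 (g * b)) := h.mul tendsto_const_nhds
  rw [hfb] at h1
  exact tendsto_nhds_unique h1 h2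

end SchurAux

open SchurAux

variable {H : Type*} [NormedAddCommGroup H] [InnerProductSpace ℂ H] [CompleteSpace H]

open ContinuousLinearMap

set_option maxHeartbeats 4000000 in
/-- Schur test: let `M = (m_{jk})` be an infinite matrix with entries in a
commutative von Neumann algebra `A`, let `p_{jk} = (m_{jk}* m_{jk})^{1/2}`, and suppose the
column sums `∑_j p_{jk}` and row sums `∑_k p_{jk}` converge in norm with norms bounded by
`B_c` resp. `B_r`. Then `(L_M a)_j = ∑_k m_{jk} a_k` defines a bounded module map
`ℓ²(A) → ℓ²(A)` with `‖L_M‖ ≤ (B_r B_c)^{1/2}`. -/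
theorem stmt_17 (A : VonNeumannAlgebra H)
    (hcomm : ∀ a b : H →L[ℂ] H, a ∈ A → b ∈ A → a * b = b * a)
    (m p : ℕ → ℕ → H →L[ℂ] H)
    (hm : ∀ j k, m j k ∈ A)
    (hpmem : ∀ j k, p j k ∈ A)
    (hppos : ∀ j k, (p j k).IsPositive)
    (hpsq : ∀ j k, p j k * p j k = star (m j k) * m j k)
    (Bc Br : ℝ)
    (hcol : ∀ k, ∃ s : H →L[ℂ] H,
      Tendsto (fun N : ℕ => ∑ j ∈ Finset.range N, p j k) atTop (𝓝 s) ∧ ‖s‖ ≤ Bc)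
    (hrow : ∀ j, ∃ s : H →L[ℂ] H,
      Tendsto (fun N : ℕ => ∑ k ∈ Finset.range N, p j k) atTop (𝓝 s) ∧ ‖s‖ ≤ Br) :
    ∀ a : ℕ → H →L[ℂ] H, MemL2 A a →
      ∃ La : ℕ → H →L[ℂ] H,
        (∀ j, Tendsto (fun K : ℕ => ∑ k ∈ Finset.range K, m j k * a k) atTop (𝓝 (La j))) ∧
        MemL2 A La ∧
        (⨆ N : ℕ, ‖∑ j ∈ Finset.range N, La j * star (La j)‖)
          ≤ Br * Bc * ⨆ N : ℕ, ‖∑ n ∈ Finset.range N, a n * star (a n)‖ := by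
  classical
  intro a ha
  obtain ⟨haA, sa, hsa⟩ := ha
  letI : CommRing (ZZ A) := commRingZZ hcomm
  have hzc : ∀ {x y : H →L[ℂ] H}, x ∈ ZZ A → y ∈ ZZ A → Commute x y :=
    fun hx hy => ZZ_commute hcomm hx hy
  have hp0 : ∀ j k, 0 ≤ p j k := fun j k =>
    (ContinuousLinearMap.nonneg_iff_isPositive _).mpr (hppos j k)
  have hZsmul1 : ∀ r : ℝ, (r • 1 : H →L[ℂ] H) ∈ ZZ A := by
    intro r
    apply mem_ZZ_of_commutes
    intro b _
    unfold Commute SemiconjBy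
    rw [mul_smul_comm, smul_mul_assoc, mul_one, one_mul]
  have hZp : ∀ j k, p j k ∈ ZZ A := fun j k => mem_ZZ_of_mem (hpmem j k)
  have hZa : ∀ k, a k ∈ ZZ A := fun k => mem_ZZ_of_mem (haA k)
  have hZa' : ∀ k, star (a k) ∈ ZZ A := fun k => mem_ZZ_of_mem (star_mem (haA k))
  have hZm : ∀ j k, m j k ∈ ZZ A := fun j k => mem_ZZ_of_mem (hm j k)
  have hZm' : ∀ j k, star (m j k) ∈ ZZ A := fun j k => mem_ZZ_of_mem (star_mem (hm j k))
  have hZAk : ∀ k, a k * star (a k) ∈ ZZ A := fun k => mul_mem (hZa k) (hZa' k)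
  have hZx : ∀ j k, m j k * a k ∈ ZZ A := fun j k => mul_mem (hZm j k) (hZa k)
  have hZx' : ∀ j k, star (m j k * a k) ∈ ZZ A := by
    intro j k; rw [star_mul]; exact mul_mem (hZa' k) (hZm' j k)
  have hA_pos : ∀ k, 0 ≤ a k * star (a k) := fun k => mul_star_self_nonneg _
  have hbdd : BddAbove (Set.range fun N : ℕ => ‖∑ n ∈ Finset.range N, a n * star (a n)‖) :=
    hsa.norm.bddAbove_range
  set Ta := ⨆ N : ℕ, ‖∑ n ∈ Finset.range N, a n * star (a n)‖ with hTadef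
  have hTa_mem : ∀ N, ‖∑ n ∈ Finset.range N, a n * star (a n)‖ ≤ Ta :=
    fun N => le_ciSup hbdd N
  have hTa0 : (0:ℝ) ≤ Ta := le_trans (norm_nonneg _) (hTa_mem 0)
  have hAk_le : ∀ k, a k * star (a k) ≤ Ta • 1 := by
    intro k
    apply le_smul_one (hA_pos k)
    calc ‖a k * star (a k)‖ ≤ ‖∑ n ∈ Finset.range (k+1), a n * star (a n)‖ :=
        CStarAlgebra.norm_le_norm_of_nonneg_of_le (hA_pos k)
          (Finset.single_le_sum (f := fun n => a n * star (a n))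
            (fun i _ => hA_pos i) (Finset.self_mem_range_succ k))
      _ ≤ Ta := hTa_mem _
  choose Rrow hRrow hRrowB using hrow
  choose Rcol hRcol hRcolB using hcol
  have hBr0 : (0:ℝ) ≤ Br := le_trans (norm_nonneg _) (hRrowB 0)
  have hBc0 : (0:ℝ) ≤ Bc := le_trans (norm_nonneg _) (hRcolB 0)
  have rowF : ∀ j (F : Finset ℕ), (∑ k ∈ F, p j k) ≤ Br • 1 := by
    intro j F
    obtain ⟨N, hN⟩ := F.exists_nat_subset_range
    calc (∑ k ∈ F, p j k) ≤ ∑ k ∈ Finset.range N, p j k :=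
        Finset.sum_le_sum_of_subset_of_nonneg hN fun i _ _ => hp0 j i
      _ ≤ Rrow j := sum_le_of_tendsto (hp0 j) (hRrow j) N
      _ ≤ Br • 1 := le_smul_one
          (nonneg_of_tendsto (fun N' => Finset.sum_nonneg fun i _ => hp0 j i) (hRrow j))
          (hRrowB j)
  have colG : ∀ k (G : Finset ℕ), (∑ j ∈ G, p j k) ≤ Bc • 1 := by
    intro k G
    obtain ⟨N, hN⟩ := G.exists_nat_subset_range
    calc (∑ j ∈ G, p j k) ≤ ∑ j ∈ Finset.range N, p j k :=
        Finset.sum_le_sum_of_subset_of_nonneg hN fun i _ _ => hp0 i k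
      _ ≤ Rcol k := sum_le_of_tendsto (fun j => hp0 j k) (hRcol k) N
      _ ≤ Bc • 1 := le_smul_one
          (nonneg_of_tendsto (fun N' => Finset.sum_nonneg fun i _ => hp0 i k) (hRcol k))
          (hRcolB k)
  -- MAIN INEQUALITY
  have mi : ∀ (j : ℕ) (F : Finset ℕ),
      (∑ k ∈ F, m j k * a k) * star (∑ k ∈ F, m j k * a k) ≤
        Br • ∑ k ∈ F, p j k * (a k * star (a k)) := by
    intro j F
    have hSpos : (0:H →L[ℂ] H) ≤ ∑ k ∈ F, p j k * (a k * star (a k)) :=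
      Finset.sum_nonneg fun k _ => mul_nonneg_comm (hp0 j k) (hA_pos k)
        (hzc (hZp j k) (hZAk k))
    apply nonneg_of_le_forall_smul hSpos
    intro ε0 hε0
    set ε := ε0 / (F.card + 1) with hεdef
    have hε : 0 < ε := by positivity
    choose σ hσl hσr hσ0 hσc using fun k => exists_inverse (hp0 j k) hε
    have hZσ : ∀ k, σ k ∈ ZZ A := by
      intro k
      apply mem_ZZ_of_commutes
      intro b hb
      exact hσc k b (hb (p j k) (hpmem j k))
    have hZs : ∀ k, p j k + ε • 1 ∈ ZZ A := fun k => add_mem (hZp j k) (hZsmul1 ε)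
    have hs_sa : ∀ k, star (p j k + ε • 1 : H →L[ℂ] H) = p j k + ε • 1 := by
      intro k
      rw [star_add, (IsSelfAdjoint.of_nonneg (hp0 j k)).star_eq, star_smul, star_trivial,
        star_one]
    have hxx : ∀ k, (m j k * a k) * star (m j k * a k)
        = (p j k * p j k) * (a k * star (a k)) := by
      intro k
      have hid := mul_identity (C := ZZ A) ⟨m j k, hZm j k⟩ ⟨star (m j k), hZm' j k⟩
        ⟨a k, hZa k⟩ ⟨star (a k), hZa' k⟩ ⟨p j k, hZp j k⟩ (Subtype.ext (hpsq j k))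
      rw [star_mul]
      exact congrArg Subtype.val hid
    have hpair : ∀ k l,
        (m j k * a k) * star (m j l * a l) + (m j l * a l) * star (m j k * a k)
        ≤ (p j l + ε • 1) * σ k * ((m j k * a k) * star (m j k * a k))
          + (p j k + ε • 1) * σ l * ((m j l * a l) * star (m j l * a l)) := by
      intro k l
      have hDstar : star ((p j l + ε • 1) * (m j k * a k) - (p j k + ε • 1) * (m j l * a l))
          = (p j l + ε • 1) * star (m j k * a k) - (p j k + ε • 1) * star (m j l * a l) := by
        rw [star_sub, star_mul (p j l + ε • 1) (m j k * a k),
          star_mul (p j k + ε • 1) (m j l * a l), hs_sa l, hs_sa k,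
          (hzc (hZx' j k) (hZs l)).eq, (hzc (hZx' j l) (hZs k)).eq]
      have hDmem : (p j l + ε • 1) * (m j k * a k) - (p j k + ε • 1) * (m j l * a l) ∈ ZZ A :=
        sub_mem (mul_mem (hZs l) (hZx j k)) (mul_mem (hZs k) (hZx j l))
      have hDmem' : star ((p j l + ε • 1) * (m j k * a k)
          - (p j k + ε • 1) * (m j l * a l)) ∈ ZZ A := by
        rw [hDstar]
        exact sub_mem (mul_mem (hZs l) (hZx' j k)) (mul_mem (hZs k) (hZx' j l))
      have hnn : (0:H →L[ℂ] H) ≤ (σ k * σ l) *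
          (((p j l + ε • 1) * (m j k * a k) - (p j k + ε • 1) * (m j l * a l)) *
            star ((p j l + ε • 1) * (m j k * a k) - (p j k + ε • 1) * (m j l * a l))) :=
        mul_nonneg_comm (mul_nonneg_comm (hσ0 k) (hσ0 l) (hzc (hZσ k) (hZσ l)))
          (mul_star_self_nonneg _)
          (hzc (mul_mem (hZσ k) (hZσ l)) (mul_mem hDmem hDmem'))
      have hid := pair_identity (C := ZZ A) ⟨m j k * a k, hZx j k⟩
        ⟨star (m j k * a k), hZx' j k⟩ ⟨m j l * a l, hZx j l⟩ ⟨star (m j l * a l), hZx' j l⟩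
        ⟨p j k + ε • 1, hZs k⟩ ⟨p j l + ε • 1, hZs l⟩ ⟨σ k, hZσ k⟩ ⟨σ l, hZσ l⟩
        (Subtype.ext (hσl k)) (Subtype.ext (hσl l))
      have hidv : (σ k * σ l) *
          (((p j l + ε • 1) * (m j k * a k) - (p j k + ε • 1) * (m j l * a l)) *
            ((p j l + ε • 1) * star (m j k * a k) - (p j k + ε • 1) * star (m j l * a l)))
          = (p j l + ε • 1) * σ k * ((m j k * a k) * star (m j k * a k))
            + (p j k + ε • 1) * σ l * ((m j l * a l) * star (m j l * a l))
            - ((m j k * a k) * star (m j l * a l) + (m j l * a l) * star (m j k * a k)) := by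
        exact congrArg Subtype.val hid
      rw [← hDstar] at hidv
      rw [hidv] at hnn
      exact sub_nonneg.mp hnn
    have e1 : (∑ k ∈ F, m j k * a k) * star (∑ k ∈ F, m j k * a k)
        = ∑ k ∈ F, ∑ l ∈ F, (m j k * a k) * star (m j l * a l) := by
      rw [star_sum, Finset.sum_mul_sum]
    have h1t : ∑ k ∈ F, ∑ l ∈ F,
        ((m j k * a k) * star (m j l * a l) + (m j l * a l) * star (m j k * a k))
        = (∑ k ∈ F, ∑ l ∈ F, (m j k * a k) * star (m j l * a l))
          + ∑ k ∈ F, ∑ l ∈ F, (m j l * a l) * star (m j k * a k) := by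
      rw [← Finset.sum_add_distrib]
      exact Finset.sum_congr rfl fun k _ => Finset.sum_add_distrib
    have hswapt : (∑ k ∈ F, ∑ l ∈ F, (m j l * a l) * star (m j k * a k))
        = ∑ k ∈ F, ∑ l ∈ F, (m j k * a k) * star (m j l * a l) := Finset.sum_comm
    have e3 : (∑ k ∈ F, m j k * a k) * star (∑ k ∈ F, m j k * a k)
        + (∑ k ∈ F, m j k * a k) * star (∑ k ∈ F, m j k * a k)
        = ∑ k ∈ F, ∑ l ∈ F,
            ((m j k * a k) * star (m j l * a l) + (m j l * a l) * star (m j k * a k)) := by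
      rw [e1, h1t, hswapt]
    have hu : ∀ k, (∑ l ∈ F, (p j l + ε • 1) * σ k *
          ((m j k * a k) * star (m j k * a k)))
        = (∑ l ∈ F, (p j l + ε • 1)) * (σ k * ((m j k * a k) * star (m j k * a k))) := by
      intro k
      rw [← Finset.sum_mul, ← Finset.sum_mul, mul_assoc]
    have h1u : ∑ k ∈ F, ∑ l ∈ F,
        ((p j l + ε • 1) * σ k * ((m j k * a k) * star (m j k * a k))
          + (p j k + ε • 1) * σ l * ((m j l * a l) * star (m j l * a l)))
        = (∑ k ∈ F, ∑ l ∈ F, (p j l + ε • 1) * σ k *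
            ((m j k * a k) * star (m j k * a k)))
          + ∑ k ∈ F, ∑ l ∈ F, (p j k + ε • 1) * σ l *
            ((m j l * a l) * star (m j l * a l)) := by
      rw [← Finset.sum_add_distrib]
      exact Finset.sum_congr rfl fun k _ => Finset.sum_add_distrib
    have hswapu : (∑ k ∈ F, ∑ l ∈ F, (p j k + ε • 1) * σ l *
          ((m j l * a l) * star (m j l * a l)))
        = ∑ k ∈ F, ∑ l ∈ F, (p j l + ε • 1) * σ k *
          ((m j k * a k) * star (m j k * a k)) := Finset.sum_comm
    have hX1 : (∑ k ∈ F, m j k * a k) * star (∑ k ∈ F, m j k * a k)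
        ≤ ∑ k ∈ F, (∑ l ∈ F, (p j l + ε • 1)) *
            (σ k * ((m j k * a k) * star (m j k * a k))) := by
      apply le_of_add_le_add
      calc (∑ k ∈ F, m j k * a k) * star (∑ k ∈ F, m j k * a k)
            + (∑ k ∈ F, m j k * a k) * star (∑ k ∈ F, m j k * a k)
          = ∑ k ∈ F, ∑ l ∈ F,
              ((m j k * a k) * star (m j l * a l)
                + (m j l * a l) * star (m j k * a k)) := e3
        _ ≤ ∑ k ∈ F, ∑ l ∈ F,
              ((p j l + ε • 1) * σ k * ((m j k * a k) * star (m j k * a k))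
                + (p j k + ε • 1) * σ l * ((m j l * a l) * star (m j l * a l))) :=
            Finset.sum_le_sum fun k _ => Finset.sum_le_sum fun l _ => hpair k l
        _ = (∑ k ∈ F, ∑ l ∈ F, (p j l + ε • 1) * σ k *
              ((m j k * a k) * star (m j k * a k)))
            + ∑ k ∈ F, ∑ l ∈ F, (p j k + ε • 1) * σ l *
              ((m j l * a l) * star (m j l * a l)) := h1u
        _ = (∑ k ∈ F, ∑ l ∈ F, (p j l + ε • 1) * σ k *
              ((m j k * a k) * star (m j k * a k)))
            + ∑ k ∈ F, ∑ l ∈ F, (p j l + ε • 1) * σ k *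
              ((m j k * a k) * star (m j k * a k)) := by rw [hswapu]
        _ = (∑ k ∈ F, (∑ l ∈ F, (p j l + ε • 1)) *
              (σ k * ((m j k * a k) * star (m j k * a k))))
            + ∑ k ∈ F, (∑ l ∈ F, (p j l + ε • 1)) *
              (σ k * ((m j k * a k) * star (m j k * a k))) := by
            rw [Finset.sum_congr rfl fun k _ => hu k]
    have hM : (∑ l ∈ F, (p j l + ε • 1)) ≤ (Br + F.card * ε) • 1 := by
      rw [Finset.sum_add_distrib, Finset.sum_const]
      have h1 : F.card • (ε • (1:H →L[ℂ] H)) = ((F.card : ℝ) * ε) • 1 := by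
        rw [← Nat.cast_smul_eq_nsmul ℝ, smul_smul]
      rw [h1, add_smul]
      exact add_le_add_left (rowF j F) _
    have hTk : ∀ k, (∑ l ∈ F, (p j l + ε • 1)) *
          (σ k * ((m j k * a k) * star (m j k * a k)))
        ≤ (Br + F.card * ε) • (p j k * (a k * star (a k))) := by
      intro k
      have hw0 : 0 ≤ σ k * ((m j k * a k) * star (m j k * a k)) :=
        mul_nonneg_comm (hσ0 k) (mul_star_self_nonneg _)
          (hzc (hZσ k) (mul_mem (hZx j k) (hZx' j k)))
      have hwZ : σ k * ((m j k * a k) * star (m j k * a k)) ∈ ZZ A :=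
        mul_mem (hZσ k) (mul_mem (hZx j k) (hZx' j k))
      have step1 := mul_le_mul_right_comm hw0 hM
        (hzc hwZ (sum_mem fun l _ => hZs l)) (hzc hwZ (hZsmul1 _))
      have step2 : ((Br + F.card * ε) • (1:H →L[ℂ] H)) *
          (σ k * ((m j k * a k) * star (m j k * a k)))
          = (Br + F.card * ε) • (σ k * ((m j k * a k) * star (m j k * a k))) := by
        rw [smul_mul_assoc, one_mul]
      have hM0 : (0:ℝ) ≤ Br + F.card * ε := by positivity
      have step3 : σ k * ((m j k * a k) * star (m j k * a k))
          ≤ p j k * (a k * star (a k)) := by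
        rw [hxx k, ← mul_assoc]
        have hidv : p j k * (a k * star (a k))
            - σ k * (p j k * p j k) * (a k * star (a k))
            = σ k * ((ε • 1) * (p j k * (a k * star (a k)))) := by
          exact congrArg Subtype.val (inv_identity (C := ZZ A) ⟨p j k, hZp j k⟩
            ⟨ε • 1, hZsmul1 ε⟩ ⟨σ k, hZσ k⟩ ⟨a k * star (a k), hZAk k⟩
            (Subtype.ext (hσl k)))
        have hpa : 0 ≤ p j k * (a k * star (a k)) :=
          mul_nonneg_comm (hp0 j k) (hA_pos k) (hzc (hZp j k) (hZAk k))
        have h2 : (0:H →L[ℂ] H) ≤ (ε • 1) * (p j k * (a k * star (a k))) := by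
          rw [smul_mul_assoc, one_mul]; exact SchurAux.smul_nonneg' hε.le hpa
        have hr : (0:H →L[ℂ] H) ≤ σ k * ((ε • 1) * (p j k * (a k * star (a k)))) :=
          mul_nonneg_comm (hσ0 k) h2
            (hzc (hZσ k) (mul_mem (hZsmul1 ε) (mul_mem (hZp j k) (hZAk k))))
        rw [← hidv] at hr
        exact sub_nonneg.mp hr
      calc (∑ l ∈ F, (p j l + ε • 1)) * (σ k * ((m j k * a k) * star (m j k * a k)))
          ≤ ((Br + F.card * ε) • (1:H →L[ℂ] H)) *
              (σ k * ((m j k * a k) * star (m j k * a k))) := step1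
        _ = (Br + F.card * ε) • (σ k * ((m j k * a k) * star (m j k * a k))) := step2
        _ ≤ (Br + F.card * ε) • (p j k * (a k * star (a k))) := smul_mono hM0 step3
    have hX2 : (∑ k ∈ F, m j k * a k) * star (∑ k ∈ F, m j k * a k)
        ≤ (Br + F.card * ε) • ∑ k ∈ F, p j k * (a k * star (a k)) := by
      refine le_trans hX1 (le_trans (Finset.sum_le_sum fun k _ => hTk k) (le_of_eq ?_))
      rw [Finset.smul_sum]
    have hle : Br + F.card * ε ≤ Br + ε0 := by
      have hc1 : (0:ℝ) < (F.card:ℝ) + 1 := by positivity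
      have : (F.card:ℝ) * ε ≤ ε0 := by
        rw [hεdef, mul_comm, div_mul_eq_mul_div, div_le_iff₀ hc1]
        nlinarith [hε0.le]
      linarith
    refine le_trans hX2 ?_
    rw [← sub_nonneg, ← sub_smul]
    exact SchurAux.smul_nonneg' (by linarith) hSpos
  -- Cauchy estimate for the rows
  have hXnorm : ∀ (j N M : ℕ), N ≤ M →
      ‖∑ k ∈ Finset.Ico N M, m j k * a k‖ * ‖∑ k ∈ Finset.Ico N M, m j k * a k‖ ≤
        Br * Ta * ‖(∑ k ∈ Finset.range M, p j k) - ∑ k ∈ Finset.range N, p j k‖ := by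
    intro j N M hNM
    have hS0 : (0:H →L[ℂ] H) ≤ ∑ k ∈ Finset.Ico N M, p j k * (a k * star (a k)) :=
      Finset.sum_nonneg fun k _ => mul_nonneg_comm (hp0 j k) (hA_pos k)
        (hzc (hZp j k) (hZAk k))
    have h1 : ‖∑ k ∈ Finset.Ico N M, m j k * a k‖ * ‖∑ k ∈ Finset.Ico N M, m j k * a k‖
        = ‖(∑ k ∈ Finset.Ico N M, m j k * a k) * star (∑ k ∈ Finset.Ico N M, m j k * a k)‖ :=
      (CStarRing.norm_self_mul_star).symm
    have h2 : ‖(∑ k ∈ Finset.Ico N M, m j k * a k) *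
          star (∑ k ∈ Finset.Ico N M, m j k * a k)‖
        ≤ Br * ‖∑ k ∈ Finset.Ico N M, p j k * (a k * star (a k))‖ := by
      calc _ ≤ ‖Br • ∑ k ∈ Finset.Ico N M, p j k * (a k * star (a k))‖ :=
            CStarAlgebra.norm_le_norm_of_nonneg_of_le (mul_star_self_nonneg _) (mi j _)
        _ = Br * ‖∑ k ∈ Finset.Ico N M, p j k * (a k * star (a k))‖ := by
            rw [norm_smul, Real.norm_of_nonneg hBr0]
    have h4 : (∑ k ∈ Finset.Ico N M, p j k * (a k * star (a k)))
        ≤ Ta • ∑ k ∈ Finset.Ico N M, p j k := by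
      rw [Finset.smul_sum]
      refine Finset.sum_le_sum fun k _ => ?_
      have := mul_le_mul_left_comm (hp0 j k) (hAk_le k) (hzc (hZp j k) (hZAk k))
        (hzc (hZp j k) (hZsmul1 Ta))
      rwa [mul_smul_comm, mul_one] at this
    have h5 : ‖∑ k ∈ Finset.Ico N M, p j k * (a k * star (a k))‖
        ≤ Ta * ‖∑ k ∈ Finset.Ico N M, p j k‖ := by
      calc _ ≤ ‖Ta • ∑ k ∈ Finset.Ico N M, p j k‖ :=
            CStarAlgebra.norm_le_norm_of_nonneg_of_le hS0 h4
        _ = Ta * ‖∑ k ∈ Finset.Ico N M, p j k‖ := by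
            rw [norm_smul, Real.norm_of_nonneg hTa0]
    have h6 : (∑ k ∈ Finset.Ico N M, p j k)
        = (∑ k ∈ Finset.range M, p j k) - ∑ k ∈ Finset.range N, p j k :=
      Finset.sum_Ico_eq_sub _ hNM
    rw [h1, ← h6]
    calc _ ≤ Br * ‖∑ k ∈ Finset.Ico N M, p j k * (a k * star (a k))‖ := h2
      _ ≤ Br * (Ta * ‖∑ k ∈ Finset.Ico N M, p j k‖) :=
          mul_le_mul_of_nonneg_left h5 hBr0
      _ = Br * Ta * ‖∑ k ∈ Finset.Ico N M, p j k‖ := by ring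
  have hLa_ex : ∀ j, ∃ L, Tendsto (fun K : ℕ => ∑ k ∈ Finset.range K, m j k * a k)
      atTop (𝓝 L) := by
    intro j
    apply cauchySeq_tendsto_of_complete
    rw [Metric.cauchySeq_iff']
    intro δ hδ
    have hcau := (hRrow j).cauchySeq
    rw [Metric.cauchySeq_iff'] at hcau
    obtain ⟨N, hN⟩ := hcau (δ * δ / (Br * Ta + 1)) (by positivity)
    refine ⟨N, fun M hM => ?_⟩
    have key := hXnorm j N M hM
    have hd := hN M hM
    rw [dist_eq_norm] at hd
    rw [dist_eq_norm, ← Finset.sum_Ico_eq_sub (fun k => m j k * a k) hM]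
    have hnn := norm_nonneg (∑ k ∈ Finset.Ico N M, m j k * a k)
    have hc0 : (0:ℝ) ≤ Br * Ta := mul_nonneg hBr0 hTa0
    have h7 : ‖∑ k ∈ Finset.Ico N M, m j k * a k‖ * ‖∑ k ∈ Finset.Ico N M, m j k * a k‖
        < δ * δ := by
      have s1 : Br * Ta * ‖(∑ k ∈ Finset.range M, p j k) - ∑ k ∈ Finset.range N, p j k‖
          ≤ Br * Ta * (δ * δ / (Br * Ta + 1)) := mul_le_mul_of_nonneg_left hd.le hc0
      have s2 : Br * Ta * (δ * δ / (Br * Ta + 1)) < δ * δ := by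
        rw [mul_div_assoc']
        rw [div_lt_iff₀ (by positivity)]
        nlinarith [mul_pos hδ hδ]
      exact lt_of_le_of_lt (le_trans key s1) s2
    nlinarith [hnn, hδ]
  choose La hLa using hLa_ex
  -- limits of squares
  have hΨ : ∀ (G : Finset ℕ), Tendsto (fun K : ℕ => ∑ j ∈ G,
      (∑ k ∈ Finset.range K, m j k * a k) * star (∑ k ∈ Finset.range K, m j k * a k))
      atTop (𝓝 (∑ j ∈ G, La j * star (La j))) :=
    fun G => tendsto_finset_sum G fun j _ => (hLa j).mul (hLa j).star
  have claimG : ∀ (G : Finset ℕ) (K : ℕ),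
      (∑ j ∈ G, (∑ k ∈ Finset.range K, m j k * a k) *
          star (∑ k ∈ Finset.range K, m j k * a k))
        ≤ Br • ∑ k ∈ Finset.range K, (∑ j ∈ G, p j k) * (a k * star (a k)) := by
    intro G K
    calc _ ≤ ∑ j ∈ G, Br • ∑ k ∈ Finset.range K, p j k * (a k * star (a k)) :=
          Finset.sum_le_sum fun j _ => mi j _
      _ = Br • ∑ j ∈ G, ∑ k ∈ Finset.range K, p j k * (a k * star (a k)) :=
          (Finset.smul_sum).symm
      _ = Br • ∑ k ∈ Finset.range K, (∑ j ∈ G, p j k) * (a k * star (a k)) := by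
          rw [Finset.sum_comm]
          congr 1
          exact Finset.sum_congr rfl fun k _ => (Finset.sum_mul _ _ _).symm
  have hGnorm : ∀ (G : Finset ℕ) (β : ℝ) (K0 : ℕ), 0 ≤ β →
      (∀ K, K0 ≤ K → (∑ j ∈ G, (∑ k ∈ Finset.range K, m j k * a k) *
          star (∑ k ∈ Finset.range K, m j k * a k)) ≤ β • 1) →
      ‖∑ j ∈ G, La j * star (La j)‖ ≤ β := by
    intro G β K0 hβ hK
    have hshift : Tendsto (fun n : ℕ => K0 + n) atTop atTop :=
      tendsto_atTop_mono (fun M => Nat.le_add_left M K0) tendsto_id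
    have hlim : (∑ j ∈ G, La j * star (La j)) ≤ β • 1 := by
      rw [← sub_nonneg]
      exact nonneg_of_tendsto
        (f := fun n : ℕ => β • 1 - ∑ j ∈ G, (∑ k ∈ Finset.range (K0+n), m j k * a k) *
          star (∑ k ∈ Finset.range (K0+n), m j k * a k))
        (fun n => sub_nonneg.mpr (hK _ (Nat.le_add_right _ _)))
        (tendsto_const_nhds.sub ((hΨ G).comp hshift))
    exact norm_le_of_le_smul_one (Finset.sum_nonneg fun j _ => mul_star_self_nonneg _) hβ hlim
  have hfin : ∀ N : ℕ, ‖∑ j ∈ Finset.range N, La j * star (La j)‖ ≤ Br * Bc * Ta := by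
    intro N
    have h := hGnorm (Finset.range N) (Br * (Bc * Ta)) 0 (by positivity) ?_
    · exact le_trans h (le_of_eq (by ring))
    intro K _
    calc _ ≤ Br • ∑ k ∈ Finset.range K, (∑ j ∈ Finset.range N, p j k) *
          (a k * star (a k)) := claimG _ _
      _ ≤ Br • (Bc • ∑ k ∈ Finset.range K, (a k * star (a k))) := by
          apply smul_mono hBr0
          rw [Finset.smul_sum]
          refine Finset.sum_le_sum fun k _ => ?_
          have h1 := mul_le_mul_right_comm (hA_pos k) (colG k (Finset.range N))
            (hzc (hZAk k) (sum_mem fun i _ => hZp i k)) (hzc (hZAk k) (hZsmul1 Bc))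
          rwa [smul_mul_assoc, one_mul] at h1
      _ ≤ Br • (Bc • (Ta • 1)) := smul_mono hBr0 (smul_mono hBc0
          (le_smul_one (Finset.sum_nonneg fun k _ => hA_pos k) (hTa_mem K)))
      _ = (Br * (Bc * Ta)) • 1 := by rw [smul_smul, smul_smul, mul_assoc]
  -- Cauchy sequence of partial sums of La squares
  have hΦc : CauchySeq (fun N : ℕ => ∑ j ∈ Finset.range N, La j * star (La j)) := by
    rw [Metric.cauchySeq_iff']
    intro δ hδ
    have hAcau := hsa.cauchySeq
    rw [Metric.cauchySeq_iff'] at hAcau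
    set η := δ / (4 * (Br * Bc + 1)) with hηdef
    have hη : 0 < η := by positivity
    obtain ⟨K0, hK0⟩ := hAcau η hη
    set η2 := δ / (4 * (Br * Ta + 1) * ((K0:ℝ) + 1)) with hη2def
    have hη2 : 0 < η2 := by positivity
    have hcolcau : ∀ k, ∃ Nk, ∀ m' ≥ Nk, ∀ n' ≥ Nk,
        dist (∑ j ∈ Finset.range m', p j k) (∑ j ∈ Finset.range n', p j k) < η2 := by
      intro k
      have hcc := (hRcol k).cauchySeq
      rw [Metric.cauchySeq_iff] at hcc
      exact hcc η2 hη2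
    choose Nf hNf using hcolcau
    set N0 := (Finset.range K0).sup Nf with hN0def
    refine ⟨N0, fun M hM => ?_⟩
    rw [dist_eq_norm, ← Finset.sum_Ico_eq_sub (fun j => La j * star (La j)) hM]
    set β := Br * ((∑ k ∈ Finset.range K0, Ta * ‖∑ j ∈ Finset.Ico N0 M, p j k‖) + Bc * η)
      with hβdef
    have hck0 : ∀ k, (0:ℝ) ≤ ‖∑ j ∈ Finset.Ico N0 M, p j k‖ := fun k => norm_nonneg _
    have hβ0 : 0 ≤ β := by
      apply mul_nonneg hBr0
      exact add_nonneg (Finset.sum_nonneg fun k _ => mul_nonneg hTa0 (hck0 k))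
        (mul_nonneg hBc0 hη.le)
    have key : ∀ K, K0 ≤ K → (∑ j ∈ Finset.Ico N0 M,
        (∑ k ∈ Finset.range K, m j k * a k) * star (∑ k ∈ Finset.range K, m j k * a k))
        ≤ β • 1 := by
      intro K hK
      have hsplit : (∑ k ∈ Finset.range K, (∑ j ∈ Finset.Ico N0 M, p j k) *
            (a k * star (a k)))
          = (∑ k ∈ Finset.range K0, (∑ j ∈ Finset.Ico N0 M, p j k) * (a k * star (a k)))
            + ∑ k ∈ Finset.Ico K0 K, (∑ j ∈ Finset.Ico N0 M, p j k) *
              (a k * star (a k)) := by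
        have hcons := (Finset.sum_Ico_consecutive
          (fun k => (∑ j ∈ Finset.Ico N0 M, p j k) * (a k * star (a k)))
          (Nat.zero_le K0) hK).symm
        simpa only [← Finset.range_eq_Ico] using hcons
      have hb1 : (∑ k ∈ Finset.range K0, (∑ j ∈ Finset.Ico N0 M, p j k) *
            (a k * star (a k)))
          ≤ (∑ k ∈ Finset.range K0, Ta * ‖∑ j ∈ Finset.Ico N0 M, p j k‖) • 1 := by
        rw [Finset.sum_smul]
        refine Finset.sum_le_sum fun k _ => ?_
        have hpk0 : (0:H →L[ℂ] H) ≤ ∑ j ∈ Finset.Ico N0 M, p j k :=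
          Finset.sum_nonneg fun j _ => hp0 j k
        have s1 := mul_le_mul_left_comm hpk0 (hAk_le k)
          (hzc (sum_mem fun i _ => hZp i k) (hZAk k))
          (hzc (sum_mem fun i _ => hZp i k) (hZsmul1 Ta))
        have s2 : (∑ j ∈ Finset.Ico N0 M, p j k) * (Ta • 1)
            = Ta • (∑ j ∈ Finset.Ico N0 M, p j k) := by rw [mul_smul_comm, mul_one]
        have s3 : (∑ j ∈ Finset.Ico N0 M, p j k) ≤ ‖∑ j ∈ Finset.Ico N0 M, p j k‖ • 1 :=
          le_smul_one hpk0 (le_refl _)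
        calc (∑ j ∈ Finset.Ico N0 M, p j k) * (a k * star (a k))
            ≤ Ta • (∑ j ∈ Finset.Ico N0 M, p j k) := by rw [← s2]; exact s1
          _ ≤ Ta • (‖∑ j ∈ Finset.Ico N0 M, p j k‖ • 1) := smul_mono hTa0 s3
          _ = (Ta * ‖∑ j ∈ Finset.Ico N0 M, p j k‖) • 1 := by rw [smul_smul]
      have hb2 : (∑ k ∈ Finset.Ico K0 K, (∑ j ∈ Finset.Ico N0 M, p j k) *
            (a k * star (a k))) ≤ (Bc * η) • 1 := by
        have t1 : ∀ k, (∑ j ∈ Finset.Ico N0 M, p j k) * (a k * star (a k))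
            ≤ Bc • (a k * star (a k)) := by
          intro k
          have h1 := mul_le_mul_right_comm (hA_pos k) (colG k (Finset.Ico N0 M))
            (hzc (hZAk k) (sum_mem fun i _ => hZp i k)) (hzc (hZAk k) (hZsmul1 Bc))
          rwa [smul_mul_assoc, one_mul] at h1
        have t2 : ‖∑ k ∈ Finset.Ico K0 K, (a k * star (a k))‖ ≤ η := by
          have hd := hK0 K hK
          rw [dist_eq_norm, ← Finset.sum_Ico_eq_sub (fun n => a n * star (a n)) hK] at hd
          exact hd.le
        calc _ ≤ ∑ k ∈ Finset.Ico K0 K, Bc • (a k * star (a k)) :=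
              Finset.sum_le_sum fun k _ => t1 k
          _ = Bc • ∑ k ∈ Finset.Ico K0 K, (a k * star (a k)) := (Finset.smul_sum).symm
          _ ≤ Bc • (η • 1) := smul_mono hBc0
              (le_smul_one (Finset.sum_nonneg fun k _ => hA_pos k) t2)
          _ = (Bc * η) • 1 := by rw [smul_smul]
      calc (∑ j ∈ Finset.Ico N0 M, (∑ k ∈ Finset.range K, m j k * a k) *
            star (∑ k ∈ Finset.range K, m j k * a k))
          ≤ Br • ∑ k ∈ Finset.range K, (∑ j ∈ Finset.Ico N0 M, p j k) *
            (a k * star (a k)) := claimG _ _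
        _ ≤ Br • (((∑ k ∈ Finset.range K0, Ta * ‖∑ j ∈ Finset.Ico N0 M, p j k‖)
              + Bc * η) • 1) := by
            apply smul_mono hBr0
            rw [hsplit]
            calc _ ≤ (∑ k ∈ Finset.range K0, Ta * ‖∑ j ∈ Finset.Ico N0 M, p j k‖) • 1
                  + (Bc * η) • (1:H →L[ℂ] H) := add_le_add hb1 hb2
              _ = _ := (add_smul _ _ _).symm
        _ = β • 1 := by rw [hβdef, smul_smul]
    have hnormG := hGnorm (Finset.Ico N0 M) β K0 hβ0 key
    have hck_small : ∀ k ∈ Finset.range K0, ‖∑ j ∈ Finset.Ico N0 M, p j k‖ ≤ η2 := by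
      intro k hk
      have hN0k : Nf k ≤ N0 := Finset.le_sup hk
      have h1 := hNf k M (le_trans hN0k hM) N0 hN0k
      rw [dist_eq_norm, ← Finset.sum_Ico_eq_sub (fun j => p j k) hM] at h1
      exact h1.le
    have hsum_ck : (∑ k ∈ Finset.range K0, Ta * ‖∑ j ∈ Finset.Ico N0 M, p j k‖)
        ≤ (K0:ℝ) * (Ta * η2) := by
      calc _ ≤ ∑ _k ∈ Finset.range K0, Ta * η2 :=
            Finset.sum_le_sum fun k hk =>
              mul_le_mul_of_nonneg_left (hck_small k hk) hTa0
        _ = (K0:ℝ) * (Ta * η2) := by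
            rw [Finset.sum_const, Finset.card_range, nsmul_eq_mul]
    have hβδ : β < δ := by
      have e2 : ((Br * Ta + 1) * ((K0:ℝ) + 1)) * η2 = δ / 4 := by
        rw [hη2def]; field_simp
      have e1 : Br * ((K0:ℝ) * (Ta * η2)) ≤ δ / 4 := by
        rw [← e2]
        have hK0c : (0:ℝ) ≤ (K0:ℝ) := Nat.cast_nonneg K0
        nlinarith [hη2.le, mul_nonneg hBr0 hTa0]
      have e4 : (Br * Bc + 1) * η = δ / 4 := by
        rw [hηdef]; field_simp
      have e3 : Br * (Bc * η) ≤ δ / 4 := by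
        rw [← e4]
        nlinarith [hη.le, mul_nonneg hBr0 hBc0]
      have e5 : β ≤ Br * ((K0:ℝ) * (Ta * η2)) + Br * (Bc * η) := by
        rw [hβdef, mul_add]
        exact add_le_add_left (mul_le_mul_of_nonneg_left hsum_ck hBr0) _
      linarith
    exact lt_of_le_of_lt hnormG hβδ
  obtain ⟨sL, hsL⟩ := cauchySeq_tendsto_of_complete hΦc
  refine ⟨La, hLa, ⟨fun j => mem_vN_of_tendsto
    (fun K => sum_mem fun k _ => mul_mem (hm j k) (haA k)) (hLa j), sL, hsL⟩, ?_⟩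
  exact ciSup_le hfin
end
end

section
/- For a, c > 0, the equality L_a^∞(ℓ²) = L_c^∞(ℓ²) (as sets of functions) holds if and only if a/c ∈ ℚ; moreover, when a/c = p/q in lowest terms, the norms satisfy ‖f‖_{L_c^∞(ℓ²)} ≤ √p ‖f‖_{L_a^∞(ℓ²)} and ‖f‖_{L_a^∞(ℓ²)} ≤ √q ‖f‖_{L_c^∞(ℓ²)}. -/
open Filter Topology MeasureTheory
open scoped ENNReal

noncomputable section

/-- Lebesgue measure restricted to `[0,a]`. -/
def μres (a : ℝ) : Measure ℝ := volume.restrict (Set.Icc 0 a)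

/-- Membership in `L_a^∞(ℓ²)`: `f` is measurable and
`esssup_{x∈[0,a]} ∑_{n∈ℤ} |f(x−na)|² < ∞` (expressed via partial sums). -/
def MemLainf (a : ℝ) (f : ℝ → ℂ) : Prop :=
  Measurable f ∧ ∃ C : ℝ, ∀ᵐ x ∂(μres a),
    ∀ s : Finset ℤ, ∑ n ∈ s, ‖f (x - (n : ℝ) * a)‖ ^ 2 ≤ C

/-- The squared norm `‖f‖²_{L_a^∞(ℓ²)} = esssup_{x∈[0,a]} ∑_{n∈ℤ} |f(x−na)|²`,
valued in `ℝ≥0∞`. -/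
def LainfNormSq (a : ℝ) (f : ℝ → ℂ) : ℝ≥0∞ :=
  essSup (fun x => ∑' n : ℤ, ((‖f (x - (n : ℝ) * a)‖₊ : ℝ≥0∞) ^ 2)) (μres a)

set_option maxHeartbeats 1000000

namespace Stmt19Aux

open Set

def ee (f : ℝ → ℂ) (y : ℝ) : ℝ≥0∞ := (‖f y‖₊ : ℝ≥0∞) ^ 2
def SS (a : ℝ) (f : ℝ → ℂ) (x : ℝ) : ℝ≥0∞ := ∑' n : ℤ, ee f (x - (n : ℝ) * a)


lemma SS_periodic (a : ℝ) (f : ℝ → ℂ) (k : ℤ) (x : ℝ) :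
    SS a f (x + (k : ℝ) * a) = SS a f x := by
  unfold SS
  rw [← (Equiv.subRight k).tsum_eq (fun n : ℤ => ee f (x - (n : ℝ) * a))]
  refine tsum_congr fun n => ?_
  simp only [Equiv.subRight_apply]
  congr 1
  push_cast
  ring

lemma essSup_SS_eq (a : ℝ) (ha : 0 < a) (f : ℝ → ℂ) :
    essSup (SS a f) (μres a) = essSup (SS a f) volume := by
  have h1 : μres a = volume.restrict (Set.Ioc 0 (0 + a)) := by
    rw [μres, zero_add, Measure.restrict_congr_set Ioc_ae_eq_Icc]
  rw [h1]
  refine MeasureTheory.IsAddFundamentalDomain.essSup_measure_restrict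
    (G := AddSubgroup.zmultiples a) (s := Ioc 0 (0+a)) (μ := volume)
    (isAddFundamentalDomain_Ioc ha 0) (fun γ x => ?_)
  obtain ⟨k, hk⟩ := γ.2
  have hk' : (γ : ℝ) = (k : ℝ) * a := by rw [← hk]; simp [zsmul_eq_mul]
  show SS a f ((γ : ℝ) + x) = SS a f x
  rw [hk', add_comm]
  exact SS_periodic a f k x

lemma ae_translate (g : ℝ → ℝ≥0∞) (t : ℝ) :
    ∀ᵐ x ∂(volume : Measure ℝ), g (x - t) ≤ essSup g volume :=
  (measurePreserving_sub_right volume t).quasiMeasurePreserving.ae (ENNReal.ae_le_essSup g)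

lemma SS_le (a c : ℝ) (f : ℝ → ℂ) (p q : ℕ) (hp : 0 < p) (hq : 0 < q)
    (h : (q : ℝ) * a = (p : ℝ) * c) (x : ℝ) :
    SS c f x ≤ ∑ r ∈ Finset.range p, SS a f (x - (r : ℝ) * c) := by
  have : NeZero p := ⟨hp.ne'⟩
  have key : ∀ r : Fin p, (∑' m : ℤ, ee f (x - ((m * (p : ℤ) + ((r : ℕ) : ℤ) : ℤ) : ℝ) * c))
      ≤ SS a f (x - ((r : ℕ) : ℝ) * c) := by
    intro r
    have h2 : ∀ m : ℤ, ee f (x - ((m * (p : ℤ) + ((r : ℕ) : ℤ) : ℤ) : ℝ) * c)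
        = (fun n : ℤ => ee f ((x - ((r : ℕ) : ℝ) * c) - (n : ℝ) * a)) (m * q) := by
      intro m
      show ee f _ = ee f _
      congr 1
      push_cast
      linear_combination (m : ℝ) * h
    calc (∑' m : ℤ, ee f (x - ((m * (p : ℤ) + ((r : ℕ) : ℤ) : ℤ) : ℝ) * c))
        = ∑' m : ℤ, (fun n : ℤ => ee f ((x - ((r : ℕ) : ℝ) * c) - (n : ℝ) * a)) (m * q) :=
          tsum_congr h2
      _ ≤ ∑' n : ℤ, ee f ((x - ((r : ℕ) : ℝ) * c) - (n : ℝ) * a) :=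
          ENNReal.tsum_comp_le_tsum_of_injective
            (fun m₁ m₂ hm => by
              have : (q : ℤ) ≠ 0 := by exact_mod_cast hq.ne'
              exact mul_right_cancel₀ this hm) _
      _ = SS a f (x - ((r : ℕ) : ℝ) * c) := rfl
  calc SS c f x
      = ∑' z : ℤ × Fin p, ee f (x - ((z.1 * (p : ℤ) + ((z.2 : ℕ) : ℤ) : ℤ) : ℝ) * c) := by
        show (∑' n : ℤ, ee f (x - (n : ℝ) * c)) = _
        rw [← ((Int.divModEquiv p).symm).tsum_eq (fun n : ℤ => ee f (x - (n : ℝ) * c))]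
        exact tsum_congr fun z => by simp [Int.divModEquiv]
    _ = ∑' m : ℤ, ∑' r : Fin p, ee f (x - ((m * (p : ℤ) + ((r : ℕ) : ℤ) : ℤ) : ℝ) * c) :=
        ENNReal.tsum_prod (f := fun (m : ℤ) (r : Fin p) => ee f (x - ((m * (p : ℤ) + ((r : ℕ) : ℤ) : ℤ) : ℝ) * c))
    _ = ∑' r : Fin p, ∑' m : ℤ, ee f (x - ((m * (p : ℤ) + ((r : ℕ) : ℤ) : ℤ) : ℝ) * c) :=
        ENNReal.tsum_comm (f := fun (m : ℤ) (r : Fin p) => ee f (x - ((m * (p : ℤ) + ((r : ℕ) : ℤ) : ℤ) : ℝ) * c))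
    _ = ∑ r : Fin p, ∑' m : ℤ, ee f (x - ((m * (p : ℤ) + ((r : ℕ) : ℤ) : ℤ) : ℝ) * c) :=
        tsum_fintype _
    _ ≤ ∑ r : Fin p, SS a f (x - ((r : ℕ) : ℝ) * c) := Finset.sum_le_sum (fun r _ => key r)
    _ = ∑ r ∈ Finset.range p, SS a f (x - (r : ℝ) * c) :=
        Fin.sum_univ_eq_sum_range (fun i : ℕ => SS a f (x - (i : ℝ) * c)) p

lemma LainfNormSq_eq (a : ℝ) (f : ℝ → ℂ) : LainfNormSq a f = essSup (SS a f) (μres a) := rfl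

lemma finsum_eq (f : ℝ → ℂ) (a x : ℝ) (s : Finset ℤ) :
    (∑ n ∈ s, ee f (x - (n : ℝ) * a)) = ENNReal.ofReal (∑ n ∈ s, ‖f (x - (n : ℝ) * a)‖ ^ 2) := by
  rw [ENNReal.ofReal_sum_of_nonneg (fun _ _ => sq_nonneg _)]
  refine Finset.sum_congr rfl fun n _ => ?_
  rw [ENNReal.ofReal_pow (norm_nonneg _), ofReal_norm]
  rfl

lemma memLainf_iff (a : ℝ) (f : ℝ → ℂ) :
    MemLainf a f ↔ (Measurable f ∧ LainfNormSq a f < ⊤) := by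
  constructor
  · rintro ⟨hm, C, hC⟩
    refine ⟨hm, ?_⟩
    have hb : ∀ᵐ x ∂(μres a), SS a f x ≤ ENNReal.ofReal C := by
      filter_upwards [hC] with x hx
      rw [SS, ENNReal.tsum_eq_iSup_sum]
      refine iSup_le fun s => ?_
      rw [finsum_eq]
      exact ENNReal.ofReal_le_ofReal (hx s)
    calc LainfNormSq a f = essSup (SS a f) (μres a) := rfl
      _ ≤ ENNReal.ofReal C := essSup_le_of_ae_le _ hb
      _ < ⊤ := ENNReal.ofReal_lt_top
  · rintro ⟨hm, hfin⟩
    refine ⟨hm, (LainfNormSq a f).toReal, ?_⟩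
    filter_upwards [ENNReal.ae_le_essSup (μ := μres a) (SS a f)] with x hx
    intro s
    have h1 : (∑ n ∈ s, ee f (x - (n : ℝ) * a)) ≤ LainfNormSq a f :=
      le_trans (ENNReal.sum_le_tsum s) hx
    have h2 := ENNReal.toReal_mono (by exact hfin.ne) h1
    rw [finsum_eq, ENNReal.toReal_ofReal (Finset.sum_nonneg fun _ _ => sq_nonneg _)] at h2
    exact h2

lemma normSq_le (a c : ℝ) (ha : 0 < a) (hc : 0 < c) (p q : ℕ) (hp : 0 < p) (hq : 0 < q)
    (h : (q : ℝ) * a = (p : ℝ) * c) (f : ℝ → ℂ) :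
    LainfNormSq c f ≤ (p : ℝ≥0∞) * LainfNormSq a f := by
  rw [LainfNormSq_eq, LainfNormSq_eq, essSup_SS_eq c hc f, essSup_SS_eq a ha f]
  set M := essSup (SS a f) volume with hM
  have h1 : ∀ᵐ x ∂(volume : Measure ℝ), ∀ r ∈ Finset.range p, SS a f (x - (r : ℝ) * c) ≤ M := by
    exact (ae_ball_iff (Finset.range p).countable_toSet).mpr
      fun r _ => ae_translate (SS a f) ((r : ℝ) * c)
  have hae : ∀ᵐ x ∂(volume : Measure ℝ), SS c f x ≤ (p : ℝ≥0∞) * M := by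
    filter_upwards [h1] with x hx
    calc SS c f x ≤ ∑ r ∈ Finset.range p, SS a f (x - (r : ℝ) * c) := SS_le a c f p q hp hq h x
      _ ≤ ∑ _r ∈ Finset.range p, M := Finset.sum_le_sum hx
      _ = (p : ℝ≥0∞) * M := by simp [Finset.sum_const, nsmul_eq_mul]
  exact essSup_le_of_ae_le _ hae



lemma exists_small (a c : ℝ) (hc : 0 < c)
    (hirr : ¬ ∃ q : ℚ, a / c = (q : ℝ)) (ε : ℝ) (hε : 0 < ε) :
    ∃ x : ℝ, (∃ n m : ℤ, x = (n : ℝ) * a + (m : ℝ) * c) ∧ 0 < x ∧ x < ε := by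
  set S : AddSubgroup ℝ := AddSubgroup.zmultiples a ⊔ AddSubgroup.zmultiples c with hS
  have hdense : Dense (S : Set ℝ) := by
    rcases S.dense_or_cyclic with h | ⟨g, hg⟩
    · exact h
    · exfalso
      have hSg : S = AddSubgroup.zmultiples g := by
        rw [hg, AddSubgroup.zmultiples_eq_closure]
      have haS : a ∈ S := SetLike.le_def.mp le_sup_left (AddSubgroup.mem_zmultiples a)
      have hcS : c ∈ S := SetLike.le_def.mp le_sup_right (AddSubgroup.mem_zmultiples c)
      rw [hSg] at haS hcS
      obtain ⟨k, hk⟩ := haS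
      obtain ⟨l, hl⟩ := hcS
      have hk' : (k : ℝ) * g = a := by rw [← hk]; simp [zsmul_eq_mul]
      have hl' : (l : ℝ) * g = c := by rw [← hl]; simp [zsmul_eq_mul]
      have hl0 : (l : ℝ) ≠ 0 := by
        intro h0
        rw [h0, zero_mul] at hl'
        exact hc.ne' hl'.symm
      refine hirr ⟨(k : ℚ) / (l : ℚ), ?_⟩
      have hcast : ((((k : ℚ) / (l : ℚ)) : ℚ) : ℝ) = (k : ℝ) / (l : ℝ) := by push_cast; ring
      rw [hcast, div_eq_div_iff hc.ne' hl0, ← hk', ← hl']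
      ring
  have hne : (Set.Ioo (0:ℝ) ε).Nonempty := ⟨ε/2, by constructor <;> linarith⟩
  obtain ⟨x, hxS, hx⟩ := hdense.exists_mem_open isOpen_Ioo hne
  rw [SetLike.mem_coe, hS, AddSubgroup.mem_sup] at hxS
  obtain ⟨y, hy, z, hz, hyz⟩ := hxS
  obtain ⟨nn, hn⟩ := hy
  obtain ⟨mm, hm⟩ := hz
  refine ⟨x, ⟨nn, mm, ?_⟩, hx.1, hx.2⟩
  rw [← hyz, ← hn, ← hm]
  simp [zsmul_eq_mul]

lemma counterexample (a c : ℝ) (ha : 0 < a) (hc : 0 < c)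
    (hirr : ¬ ∃ q : ℚ, a / c = (q : ℝ)) :
    ∃ f : ℝ → ℂ, MemLainf a f ∧ ¬ MemLainf c f := by
  classical
  set α : ℝ := min a c / 4 with hαdef
  have hα0 : 0 < α := div_pos (lt_min ha hc) (by norm_num)
  have hαa : α < a := by
    have h1 : min a c ≤ a := min_le_left _ _
    rw [hαdef]; linarith
  have hαc : 4 * α ≤ c := by
    have h1 : min a c ≤ c := min_le_right _ _
    rw [hαdef]; linarith
  let F : ℝ → ℝ := fun ε => if h : 0 < ε then (exists_small a c hc hirr ε h).choose else 1
  have hF : ∀ ε : ℝ, 0 < ε →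
      ((∃ n m : ℤ, F ε = (n : ℝ) * a + (m : ℝ) * c) ∧ 0 < F ε ∧ F ε < ε) := by
    intro ε h
    have := (exists_small a c hc hirr ε h).choose_spec
    simpa only [F, dif_pos h] using this
  set r : ℕ → ℝ := fun k => F^[k + 1] α with hrdef
  have hr_succ : ∀ k, r (k + 1) = F (r k) := by
    intro k
    show F^[k + 2] α = F (F^[k + 1] α)
    rw [Function.iterate_succ_apply']
  have hr0 : ∀ k, 0 < r k ∧ r k < α := by
    intro k
    induction k with
    | zero =>
      show 0 < F^[1] α ∧ F^[1] α < α
      rw [Function.iterate_one]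
      exact ⟨(hF α hα0).2.1, (hF α hα0).2.2⟩
    | succ j ih =>
      rw [hr_succ j]
      exact ⟨(hF (r j) ih.1).2.1, lt_trans (hF (r j) ih.1).2.2 ih.2⟩
  have hrdec : ∀ k, r (k + 1) < r k := fun k => by
    rw [hr_succ k]; exact (hF (r k) (hr0 k).1).2.2
  have hanti : StrictAnti r := strictAnti_nat_of_succ_lt hrdec
  have hmem : ∀ k, ∃ nn mm : ℤ, r k = (nn : ℝ) * a + (mm : ℝ) * c := by
    intro k
    cases k with
    | zero =>
      show ∃ nn mm : ℤ, F^[1] α = (nn : ℝ) * a + (mm : ℝ) * c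
      rw [Function.iterate_one]
      exact (hF α hα0).1
    | succ j =>
      rw [hr_succ j]
      exact (hF (r j) (hr0 j).1).1
  choose n m hnm using hmem
  set A : Set ℝ :=
    ⋃ k : ℕ, Set.Ico ((n k : ℝ) * a + (α - r k)) ((n k : ℝ) * a + (α - r (k + 1))) with hA
  set f : ℝ → ℂ := A.indicator (fun _ => (1 : ℂ)) with hf
  have hAmeas : MeasurableSet A := MeasurableSet.iUnion fun k => measurableSet_Ico
  have hfm : Measurable f := measurable_const.indicator hAmeas
  have hfval_mem : ∀ y, y ∈ A → ‖f y‖ ^ 2 = 1 := fun y hy => by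
    simp [hf, Set.indicator_of_mem hy]
  have hfval_not : ∀ y, y ∉ A → ‖f y‖ ^ 2 = 0 := fun y hy => by
    simp [hf, Set.indicator_of_notMem hy]
  -- uniqueness of translates within a period cell
  have main : ∀ x : ℝ, 0 ≤ x → x < a → ∀ n1 : ℤ, x - (n1 : ℝ) * a ∈ A →
      ∃ k, n1 = -(n k) ∧ (α - r k ≤ x ∧ x < α - r (k + 1)) := by
    intro x hx0 hxa n1 h1
    rw [hA, Set.mem_iUnion] at h1
    obtain ⟨k, hk⟩ := h1
    rw [Set.mem_Ico] at hk
    obtain ⟨hl, hr'⟩ := hk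
    have hrk := hr0 k
    have hrk1 := hr0 (k + 1)
    have hNlt : ((n1 + n k : ℤ) : ℝ) * a < 1 * a := by push_cast; nlinarith
    have hNgt : (-1 : ℝ) * a < ((n1 + n k : ℤ) : ℝ) * a := by push_cast; nlinarith
    have hN1 : (n1 + n k : ℤ) < 1 := by
      have := lt_of_mul_lt_mul_right hNlt ha.le
      exact_mod_cast this
    have hN2 : (-1 : ℤ) < n1 + n k := by
      have := lt_of_mul_lt_mul_right hNgt ha.le
      exact_mod_cast this
    have hN0 : n1 = -(n k) := by omega
    have hcastR : (n1 : ℝ) + (n k : ℝ) = 0 := by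
      have : ((n1 + n k : ℤ) : ℝ) = 0 := by
        have : n1 + n k = 0 := by omega
        exact_mod_cast this
      push_cast at this
      linarith
    have hsum0 : (n1 : ℝ) * a + (n k : ℝ) * a = 0 := by linear_combination a * hcastR
    exact ⟨k, hN0, by linarith, by linarith⟩
  have huniq : ∀ x : ℝ, 0 ≤ x → x < a → ∀ n1 : ℤ, x - (n1 : ℝ) * a ∈ A →
      ∀ n2 : ℤ, x - (n2 : ℝ) * a ∈ A → n1 = n2 := by
    intro x hx0 hxa n1 h1 n2 h2
    obtain ⟨k1, hk1, hx1l, hx1r⟩ := main x hx0 hxa n1 h1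
    obtain ⟨k2, hk2, hx2l, hx2r⟩ := main x hx0 hxa n2 h2
    have hkk : k1 = k2 := by
      by_contra hne
      rcases lt_or_gt_of_ne hne with h | h
      · have : r k2 ≤ r (k1 + 1) := hanti.antitone (by omega)
        linarith
      · have : r k1 ≤ r (k2 + 1) := hanti.antitone (by omega)
        linarith
    rw [hk1, hk2, hkk]
  refine ⟨f, ⟨hfm, 1, ?_⟩, ?_⟩
  · -- MemLainf a f
    have hne_a : ∀ᵐ x ∂(volume : Measure ℝ), x ≠ a := by
      rw [ae_iff]
      have hset : {x : ℝ | ¬ x ≠ a} = {a} := by ext y; simp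
      rw [hset]
      exact measure_singleton a
    filter_upwards [ae_restrict_mem measurableSet_Icc, ae_restrict_of_ae hne_a] with x hx hxa
    intro s
    have hxlt : x < a := lt_of_le_of_ne hx.2 hxa
    by_cases hex : ∃ n0 ∈ s, x - (n0 : ℝ) * a ∈ A
    · obtain ⟨n0, hn0s, hn0⟩ := hex
      have hsum : ∑ nn ∈ s, ‖f (x - (nn : ℝ) * a)‖ ^ 2 = ‖f (x - (n0 : ℝ) * a)‖ ^ 2 := by
        refine Finset.sum_eq_single_of_mem n0 hn0s fun nn _ hne => ?_
        exact hfval_not _ fun hmem' => hne (huniq x hx.1 hxlt nn hmem' n0 hn0)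
      rw [hsum, hfval_mem _ hn0]
    · push_neg at hex
      have hz : ∑ nn ∈ s, ‖f (x - (nn : ℝ) * a)‖ ^ 2 = 0 :=
        Finset.sum_eq_zero fun nn hnn => hfval_not _ (hex nn hnn)
      rw [hz]; norm_num
  · -- ¬ MemLainf c f
    rintro ⟨-, C, hC⟩
    obtain ⟨K, hK⟩ := exists_nat_gt C
    have hKne : (Finset.range (K + 1)).Nonempty := ⟨0, by simp⟩
    set ε' : ℝ := (Finset.range (K + 1)).inf' hKne (fun k => r k - r (k + 1)) with hε'
    have hε'pos : 0 < ε' := by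
      rw [hε', Finset.lt_inf'_iff]
      exact fun k _ => by linarith [hrdec k]
    have hε'le : ∀ k ∈ Finset.range (K + 1), ε' ≤ r k - r (k + 1) :=
      fun k hk => Finset.inf'_le _ hk
    have hε'lt : ε' < α := by
      have h1 := hε'le 0 (by simp)
      have h2 := (hr0 0).2
      have h3 := (hr0 1).1
      linarith
    have hBsub : Set.Ico α (α + ε') ⊆ Set.Icc 0 c := by
      intro x hx
      rw [Set.mem_Ico] at hx
      exact ⟨by linarith, by linarith⟩
    have hbig : ∀ x ∈ Set.Ico α (α + ε'),
        ¬ (∀ s : Finset ℤ, ∑ nn ∈ s, ‖f (x - (nn : ℝ) * c)‖ ^ 2 ≤ C) := by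
      intro x hx hall
      rw [Set.mem_Ico] at hx
      have hminj : Set.InjOn (fun k => m k) (Finset.range (K + 1)) := by
        intro k1 _ k2 _ hmk
        dsimp at hmk
        by_contra hne
        have hrne : r k1 ≠ r k2 := fun h => hne (hanti.injective h)
        have hmkR : (m k1 : ℝ) = (m k2 : ℝ) := by exact_mod_cast hmk
        have hd : ((n k1 - n k2 : ℤ) : ℝ) * a = r k1 - r k2 := by
          push_cast
          linear_combination hnm k2 - hnm k1 - c * hmkR
        have hb1 : r k1 - r k2 < 1 * a := by
          have := (hr0 k1).2; have := (hr0 k2).1; linarith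
        have hb2 : (-1 : ℝ) * a < r k1 - r k2 := by
          have := (hr0 k1).1; have := (hr0 k2).2; linarith
        have hd1 : (n k1 - n k2 : ℤ) < 1 := by
          have := lt_of_mul_lt_mul_right (hd ▸ hb1 : ((n k1 - n k2 : ℤ) : ℝ) * a < 1 * a) ha.le
          exact_mod_cast this
        have hd2 : (-1 : ℤ) < n k1 - n k2 := by
          have := lt_of_mul_lt_mul_right (hd ▸ hb2 : (-1 : ℝ) * a < ((n k1 - n k2 : ℤ) : ℝ) * a) ha.le
          exact_mod_cast this
        have : n k1 = n k2 := by omega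
        apply hrne
        have : ((n k1 - n k2 : ℤ) : ℝ) = 0 := by rw [this]; simp
        rw [this, zero_mul] at hd
        linarith
      have hcard : ((Finset.range (K + 1)).image (fun k => m k)).card = K + 1 := by
        rw [Finset.card_image_of_injOn hminj, Finset.card_range]
      have hterm : ∀ nn ∈ (Finset.range (K + 1)).image (fun k => m k),
          ‖f (x - (nn : ℝ) * c)‖ ^ 2 = 1 := by
        intro nn hnn
        rw [Finset.mem_image] at hnn
        obtain ⟨k, hkmem, rfl⟩ := hnn
        refine hfval_mem _ ?_
        rw [hA, Set.mem_iUnion]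
        refine ⟨k, ?_⟩
        rw [Set.mem_Ico]
        have hr' := hnm k
        have hδ := hε'le k hkmem
        constructor
        · linarith
        · linarith
      have hsum : ∑ nn ∈ (Finset.range (K + 1)).image (fun k => m k),
          ‖f (x - (nn : ℝ) * c)‖ ^ 2 = (K + 1 : ℝ) := by
        rw [Finset.sum_congr rfl hterm, Finset.sum_const, hcard, nsmul_eq_mul, mul_one]
        push_cast
        ring
      have := hall ((Finset.range (K + 1)).image (fun k => m k))
      rw [hsum] at this
      have : C < (K + 1 : ℝ) := by linarith
      linarith
    have hBE : Set.Ico α (α + ε') ⊆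
        {x | ¬ ∀ s : Finset ℤ, ∑ nn ∈ s, ‖f (x - (nn : ℝ) * c)‖ ^ 2 ≤ C} :=
      fun x hx => hbig x hx
    have h0 : μres c {x | ¬ ∀ s : Finset ℤ, ∑ nn ∈ s, ‖f (x - (nn : ℝ) * c)‖ ^ 2 ≤ C} = 0 :=
      ae_iff.mp hC
    have hle : μres c (Set.Ico α (α + ε')) = 0 :=
      le_antisymm (le_trans (measure_mono hBE) h0.le) zero_le
    have hvol : μres c (Set.Ico α (α + ε')) = ENNReal.ofReal ε' := by
      rw [μres, Measure.restrict_apply' measurableSet_Icc,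
        Set.inter_eq_self_of_subset_left hBsub, Real.volume_Ico]
      congr 1
      ring
    rw [hvol] at hle
    rw [ENNReal.ofReal_eq_zero] at hle
    linarith

end Stmt19Aux

/-- for `a, c > 0`, `L_a^∞(ℓ²) = L_c^∞(ℓ²)` (as sets of functions) iff
`a/c ∈ ℚ`; moreover, if `a/c = p/q` in lowest terms then
`‖f‖_{L_c^∞(ℓ²)} ≤ √p ‖f‖_{L_a^∞(ℓ²)}` and `‖f‖_{L_a^∞(ℓ²)} ≤ √q ‖f‖_{L_c^∞(ℓ²)}`
(stated with squared norms). -/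
theorem stmt_19 (a c : ℝ) (ha : 0 < a) (hc : 0 < c) :
    ({f : ℝ → ℂ | MemLainf a f} = {f : ℝ → ℂ | MemLainf c f} ↔
      ∃ q : ℚ, a / c = (q : ℝ))
    ∧
    (∀ p q : ℕ, 0 < p → 0 < q → Nat.Coprime p q → a / c = (p : ℝ) / (q : ℝ) →
      ∀ f : ℝ → ℂ, Measurable f →
        LainfNormSq c f ≤ (p : ℝ≥0∞) * LainfNormSq a f ∧
        LainfNormSq a f ≤ (q : ℝ≥0∞) * LainfNormSq c f) := by
  constructor
  · constructor
    · intro hset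
      by_contra hirr
      obtain ⟨f, hfa, hfc⟩ := Stmt19Aux.counterexample a c ha hc hirr
      have hmem : f ∈ {f : ℝ → ℂ | MemLainf a f} := hfa
      rw [hset] at hmem
      exact hfc hmem
    · rintro ⟨q, hq⟩
      have hqpos : (0 : ℝ) < (q : ℝ) := hq ▸ div_pos ha hc
      have hqpos' : 0 < q := by exact_mod_cast hqpos
      have hnum : (0 : ℤ) < q.num := Rat.num_pos.mpr hqpos'
      set p : ℕ := q.num.toNat with hpdef
      set d : ℕ := q.den with hddef
      have hp : 0 < p := by simp only [hpdef]; omega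
      have hd : 0 < d := q.pos
      rw [div_eq_iff hc.ne'] at hq
      have hpc : ((p : ℕ) : ℝ) = ((q.num : ℤ) : ℝ) := by
        simp only [hpdef]
        exact_mod_cast congrArg (fun z : ℤ => (z : ℝ)) (Int.toNat_of_nonneg hnum.le)
      have hkey : (d : ℝ) * a = (p : ℝ) * c := by
        have hcast : ((q : ℚ) : ℝ) = (q.num : ℝ) / (q.den : ℝ) := Rat.cast_def q
        have hden0 : ((q.den : ℕ) : ℝ) ≠ 0 := Nat.cast_ne_zero.mpr q.den_nz
        rw [hq, hcast, hpc]
        field_simp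
        rfl
      ext f
      simp only [Set.mem_setOf_eq]
      rw [Stmt19Aux.memLainf_iff, Stmt19Aux.memLainf_iff]
      constructor
      · rintro ⟨hm, hfin⟩
        refine ⟨hm, lt_of_le_of_lt (Stmt19Aux.normSq_le a c ha hc p d hp hd hkey f) ?_⟩
        exact ENNReal.mul_lt_top (by simp) hfin
      · rintro ⟨hm, hfin⟩
        refine ⟨hm, lt_of_le_of_lt (Stmt19Aux.normSq_le c a hc ha d p hd hp hkey.symm f) ?_⟩
        exact ENNReal.mul_lt_top (by simp) hfin
  · intro p q hp hq _hcop hratio f _hf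
    have hq0 : ((q : ℕ) : ℝ) ≠ 0 := Nat.cast_ne_zero.mpr hq.ne'
    rw [div_eq_div_iff hc.ne' hq0] at hratio
    have hkey : (q : ℝ) * a = (p : ℝ) * c := by linarith
    exact ⟨Stmt19Aux.normSq_le a c ha hc p q hp hq hkey f,
           Stmt19Aux.normSq_le c a hc ha q p hq hp hkey.symm f⟩
end
end
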